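/- arXiv:2008.06675 — 2 statements merged into one kernel-verified Lean document; each statement's English description precedes it below -/
import Mathlib

section
/- For any non-negative integer n, the sum over i from 0 to n of (-1)^i * C(n,i) * C(n+i,i) * H_{n+i} equals 2*(-1)^n * H_n, where H_m is the m-th harmonic number. -/
/-!
In any binomial ring, upper negation `C(r + i, i) = (-1)^i C(-r - 1, i)` and Chu–Vandermonde give
`∑ i ≤ n, (-1)^i C(n, i) C(r + i, i) = (-1)^n C(r, n)`. At `r = n` this reads
`∑ (-1)^i C(n, i) C(n + i, i) = (-1)^n`. Taking `r = X` in `ℚ[X]` and differentiating at `X = n`,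
with `d/dX C(X, k) = C(m, k) (H m - H (m - k))` at `X = m ≥ k` (logarithmic derivative of the
falling factorial), gives `∑ (-1)^i C(n, i) C(n + i, i) (H (n + i) - H n) = (-1)^n H n`.
Adding `H n` times the first identity proves the theorem.
-/

def H (n : ℕ) : ℚ := ∑ j ∈ Finset.range n, (1 : ℚ) / (j + 1)

open Polynomial Finset

theorem Ring.choose_neg_eq_neg_one_pow_mul {R : Type*} [CommRing R] [BinomialRing R]
    (r : R) (n : ℕ) : Ring.choose (-r) n = (-1) ^ n * Ring.choose (r + n - 1) n := by
  rw [Ring.choose_neg]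
  simp [Int.negOnePow_def, Units.smul_def]

theorem Ring.sum_neg_one_pow_mul_choose_mul_choose_add {R : Type*} [CommRing R] [BinomialRing R]
    (r : R) (n : ℕ) :
    ∑ i ∈ range (n + 1), (-1) ^ i * (n.choose i : R) * Ring.choose (r + i) i
      = (-1) ^ n * Ring.choose r n := by
  have hvandermonde := Ring.add_choose_eq (r := -(r + 1)) (s := (n : R)) n (Commute.all _ _)
  rw [Nat.sum_antidiagonal_eq_sum_range_succ
    (fun i j => Ring.choose (-(r + 1)) i * Ring.choose (n : R) j)] at hvandermonde
  calc ∑ i ∈ range (n + 1), (-1) ^ i * (n.choose i : R) * Ring.choose (r + i) i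
      = ∑ i ∈ range (n + 1), Ring.choose (-(r + 1)) i * Ring.choose (n : R) (n - i) := by
        refine sum_congr rfl fun i hi => ?_
        rw [Ring.choose_natCast, Nat.choose_symm (mem_range_succ_iff.1 hi),
          Ring.choose_neg_eq_neg_one_pow_mul, add_sub_right_comm, add_sub_cancel_right]
        ring
    _ = Ring.choose (-(r - n + 1)) n := by rw [← hvandermonde]; congr 1; ring
    _ = (-1) ^ n * Ring.choose r n := by
        rw [Ring.choose_neg_eq_neg_one_pow_mul]; congr 2; ring

theorem descPochhammer_eq_factorial_smul_choose_X (k : ℕ) :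
    descPochhammer ℚ k = k.factorial • Ring.choose (X : ℚ[X]) k := by
  rw [← Ring.descPochhammer_eq_factorial_smul_choose, ← aeval_eq_smeval, aeval_X_left_eq_map,
    descPochhammer_map]

theorem H_succ (m : ℕ) : H (m + 1) = H m + 1 / (m + 1) := by
  simp [H, sum_range_succ]

theorem eval_derivative_descPochhammer {k m : ℕ} (h : k ≤ m) :
    (derivative (descPochhammer ℚ k)).eval (m : ℚ) = m.descFactorial k * (H m - H (m - k)) := by
  induction k with
  | zero => simp
  | succ k ih =>
    obtain ⟨j, rfl⟩ := Nat.exists_eq_add_of_le h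
    rw [descPochhammer_succ_right, derivative_mul, eval_add, eval_mul, eval_mul, ih (by omega),
      descPochhammer_eval_eq_descFactorial, Nat.descFactorial_succ,
      show k + 1 + j - k = j + 1 by omega, show k + 1 + j - (k + 1) = j by omega, H_succ]
    simp only [derivative_sub, derivative_X, derivative_natCast, sub_zero, eval_one, eval_sub,
      eval_X, eval_natCast]
    push_cast
    field_simp
    ring

theorem eval_derivative_choose_X {k m : ℕ} (h : k ≤ m) :
    (derivative (Ring.choose (X : ℚ[X]) k)).eval (m : ℚ) = m.choose k * (H m - H (m - k)) := by
  have hfactorial := eval_derivative_descPochhammer (m := m) h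
  rw [descPochhammer_eq_factorial_smul_choose_X, Nat.descFactorial_eq_factorial_mul_choose,
    map_nsmul, eval_smul, nsmul_eq_mul, Nat.cast_mul, mul_assoc] at hfactorial
  exact mul_left_cancel₀ (by positivity) hfactorial

theorem eval_derivative_choose_X_add_natCast {a k m : ℕ} (h : k ≤ m + a) :
    (derivative (Ring.choose (X + (a : ℚ[X])) k)).eval (m : ℚ)
      = (m + a).choose k * (H (m + a) - H (m + a - k)) := by
  have hcomp : Ring.choose (X + (a : ℚ[X])) k = (Ring.choose X k).comp (X + (a : ℚ[X])) := by
    have := Ring.map_choose (compRingHom (R := ℚ) (X + (a : ℚ[X]))) X k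
    rw [coe_compRingHom_apply, coe_compRingHom_apply, X_comp] at this
    exact this.symm
  rw [hcomp, derivative_comp, eval_mul, eval_comp]
  simp only [derivative_add, derivative_X, derivative_natCast, eval_add, eval_X, eval_natCast,
    add_zero, eval_one, one_mul]
  rw [← Nat.cast_add, eval_derivative_choose_X h]

theorem sum_neg_one_pow_mul_choose_mul_add_choose_mul_H_sub (n : ℕ) :
    ∑ i ∈ range (n + 1), (-1 : ℚ) ^ i * (n.choose i) * ((n + i).choose i) * (H (n + i) - H n)
      = (-1) ^ n * H n := by
  have hderiv := congrArg (fun p => (derivative p).eval (n : ℚ))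
    (Ring.sum_neg_one_pow_mul_choose_mul_choose_add (X : ℚ[X]) n)
  simp only [derivative_mul, map_sum, derivative_pow, derivative_neg, derivative_one,
    derivative_natCast, neg_zero, mul_zero, zero_mul, zero_add, eval_finsetSum, eval_mul,
    eval_pow, eval_neg, eval_one, eval_natCast, eval_derivative_choose_X le_rfl,
    eval_derivative_choose_X_add_natCast (Nat.le_add_left _ n), Nat.add_sub_cancel,
    Nat.sub_self, Nat.choose_self] at hderiv
  rw [show H 0 = 0 from sum_range_zero _, Nat.cast_one, one_mul, sub_zero] at hderiv
  simpa only [mul_assoc] using hderiv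

theorem stmt2 (n : ℕ) :
    ∑ i ∈ Finset.range (n + 1),
        (-1 : ℚ) ^ i * (n.choose i) * ((n + i).choose i) * H (n + i)
      = 2 * (-1 : ℚ) ^ n * H n := by
  have hvalue : ∑ i ∈ range (n + 1), (-1 : ℚ) ^ i * (n.choose i) * ((n + i).choose i)
      = (-1) ^ n := by
    simpa only [← Nat.cast_add, Ring.choose_natCast, Nat.choose_self, Nat.cast_one,
      mul_one] using
      Ring.sum_neg_one_pow_mul_choose_mul_choose_add (n : ℚ) n
  calc ∑ i ∈ range (n + 1), (-1 : ℚ) ^ i * (n.choose i) * ((n + i).choose i) * H (n + i)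
      = ∑ i ∈ range (n + 1), (-1 : ℚ) ^ i * (n.choose i) * ((n + i).choose i) * (H (n + i) - H n)
        + (∑ i ∈ range (n + 1), (-1 : ℚ) ^ i * (n.choose i) * ((n + i).choose i)) * H n := by
        rw [sum_mul, ← sum_add_distrib]
        exact sum_congr rfl fun i _ => by ring
    _ = 2 * (-1 : ℚ) ^ n * H n := by
        rw [sum_neg_one_pow_mul_choose_mul_add_choose_mul_H_sub, hvalue]
        ring
end

section
/- For any prime p >= 5 and m = floor(p/3), and any integer i with 0 <= i <= m, H_{3i} is congruent modulo p to (1/3)*(H_i + H_{m+i} + H_{m-i} - 2*H_m), where H_n is the n-th harmonic number. -/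
/-!
Write `p = 3m + r` with `r ∈ {1, 2}`. Passing from `i` to `i + 1` changes the left-hand side by
`1/(3i+1) + 1/(3i+2) - 1/(3(m+i+1)) + 1/(3(m-i))`, the term `1/(3i+3)` cancelling against `H_{i+1}/3`.
With `a = 3i+3-r` and `b = 3i+r` we have `{a, b} = {3i+1, 3i+2}`, `3(m+i+1) = p + a` and
`3(m-i) = p - b`, so the increment is `p/(a(p+a)) + p/(b(p-b))`, and every factor of these
denominators is an integer strictly between `0` and `p`.
-/

open Finset

lemma H_succ_s18 (n : ℕ) : H (n + 1) = H n + (n + 1 : ℚ)⁻¹ := by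
  simp [H, sum_range_succ]

lemma inv_natCast_mem_padicValuation_integer {p n : ℕ} [Fact p.Prime] (hn : 0 < n) (hnp : n < p) :
    (n : ℚ)⁻¹ ∈ (Rat.padicValuation p).integer := by
  rw [Valuation.mem_integer_iff, Rat.padicValuation_le_one_iff, Rat.inv_natCast_den_of_pos hn]
  exact Nat.not_dvd_of_pos_of_lt hn hnp

/-- `p * defectTerm m r t` is the increment at step `t`, written as `p/(a(p+a)) + p/(b(p-b))`. -/
def defectTerm (m r t : ℕ) : ℚ :=
  ((3 * t + 3 - r : ℕ) : ℚ)⁻¹ * 3⁻¹ * ((m + t + 1 : ℕ) : ℚ)⁻¹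
    + ((3 * t + r : ℕ) : ℚ)⁻¹ * 3⁻¹ * ((m - t : ℕ) : ℚ)⁻¹

lemma defectTerm_mem_padicValuation_integer {p m r t : ℕ} [Fact p.Prime] (hr₀ : 0 < r) (hr₃ : r < 3)
    (hp : p = 3 * m + r) (ht : t < m) :
    defectTerm m r t ∈ (Rat.padicValuation p).integer := by
  have h3 : ((3 : ℕ) : ℚ)⁻¹ ∈ (Rat.padicValuation p).integer :=
    inv_natCast_mem_padicValuation_integer (by norm_num) (by omega)
  unfold defectTerm
  rw [← Nat.cast_ofNat]
  refine add_mem (mul_mem (mul_mem ?_ h3) ?_) (mul_mem (mul_mem ?_ h3) ?_) <;>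
    exact inv_natCast_mem_padicValuation_integer (by omega) (by omega)

lemma natCast_mul_defectTerm {m r t : ℕ} (hr₀ : 0 < r) (hr₃ : r < 3) (ht : t < m) :
    ((3 * m + r : ℕ) : ℚ) * defectTerm m r t
      = ((3 * t + 3 - r : ℕ) : ℚ)⁻¹ + ((3 * t + r : ℕ) : ℚ)⁻¹
        - 3⁻¹ * (m + t + 1 : ℚ)⁻¹ + 3⁻¹ * (m - t : ℚ)⁻¹ := by
  have ha : ((3 * t + 3 - r : ℕ) : ℚ) ≠ 0 := by norm_cast; omega
  have hb : ((3 * t + r : ℕ) : ℚ) ≠ 0 := by norm_cast; omega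
  have hmt : (m - t : ℚ) ≠ 0 := sub_ne_zero.mpr (by exact_mod_cast ht.ne')
  have hcast : ((3 * t + 3 - r : ℕ) : ℚ) = 3 * t + 3 - r := by
    rw [Nat.cast_sub (by omega)]; push_cast; ring
  simp only [defectTerm, Nat.cast_sub ht.le]
  push_cast
  field_simp
  rw [hcast]
  ring

lemma inv_add_inv_of_lt_three {r t : ℕ} (hr₀ : 0 < r) (hr₃ : r < 3) :
    ((3 * t + 3 - r : ℕ) : ℚ)⁻¹ + ((3 * t + r : ℕ) : ℚ)⁻¹ = (3 * t + 1 : ℚ)⁻¹ + (3 * t + 2 : ℚ)⁻¹ := by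
  interval_cases r
  · rw [show 3 * t + 3 - 1 = 3 * t + 2 by omega]; push_cast; ring
  · rw [show 3 * t + 3 - 2 = 3 * t + 1 by omega]; push_cast; ring

lemma H_three_mul_sub_eq {m r i : ℕ} (hr₀ : 0 < r) (hr₃ : r < 3) (hi : i ≤ m) :
    H (3 * i) - 1 / 3 * (H i + H (m + i) + H (m - i) - 2 * H m)
      = ((3 * m + r : ℕ) : ℚ) * ∑ t ∈ range i, defectTerm m r t := by
  induction i with
  | zero => simp [H, two_mul]
  | succ i ih =>
    have ih := ih (by omega)
    rw [show m - i = m - (i + 1) + 1 by omega, H_succ_s18] at ih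
    rw [show 3 * (i + 1) = 3 * i + 1 + 1 + 1 by ring, show m + (i + 1) = m + i + 1 by ring,
      sum_range_succ, mul_add, natCast_mul_defectTerm hr₀ hr₃ hi, inv_add_inv_of_lt_three hr₀ hr₃]
    simp only [H_succ_s18]
    have hthird : (3 * i + 1 + 1 + 1 : ℚ)⁻¹ = 3⁻¹ * (i + 1 : ℚ)⁻¹ := by rw [← mul_inv]; ring
    push_cast [Nat.cast_sub hi] at ih ⊢
    linear_combination ih + hthird

theorem stmt18 (p : ℕ) (hp : p.Prime) (h5 : 5 ≤ p) (i : ℕ) (hi : i ≤ p / 3) :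
    ∃ c : ℚ,
      H (3 * i) - (1 / 3) * (H i + H (p / 3 + i) + H (p / 3 - i) - 2 * H (p / 3))
        = p * c ∧ ¬ (p ∣ c.den) := by
  have := Fact.mk hp
  have hr₀ : 0 < p % 3 := by
    have := hp.eq_one_or_self_of_dvd 3
    omega
  have hr₃ : p % 3 < 3 := p.mod_lt (by norm_num)
  have hp3 : p = 3 * (p / 3) + p % 3 := (Nat.div_add_mod p 3).symm
  refine ⟨∑ t ∈ range i, defectTerm (p / 3) (p % 3) t, ?_, ?_⟩
  · rw [H_three_mul_sub_eq hr₀ hr₃ hi, ← hp3]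
  · rw [← Rat.padicValuation_le_one_iff, ← Valuation.mem_integer_iff]
    exact sum_mem fun t ht => defectTerm_mem_padicValuation_integer hr₀ hr₃ hp3
      ((mem_range.mp ht).trans_le hi)
end
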